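/- With $T_2^{(k+1)}$, $T_1^{(k+1)}$, and $S^{(k)}$ as defined for the self-reproducing algebra $[G_1,G_\alpha] = G_1 G_\alpha$, and $\sigma = -\sum_a \mathcal{P}_a \partial/\partial G_a$ the covariant contracting homotopy, one has $\sigma S^{(k)} = (-1)^{k+1} T_2^{(k+1)} - T_1^{(k+1)}$. -/
import Mathlib


open MvPolynomial Finset

/-- The extended algebra `ℚ[G₁,…,Gₙ] ⊗ Λ(η¹,…,ηⁿ,𝒫₁,…,𝒫ₙ)`: an element is given by
its polynomial coefficient on each monomial in the anticommuting ghosts `η^a`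
(index `Sum.inl a`) and ghost momenta `𝒫_a` (index `Sum.inr a`), the Grassmann
monomial attached to a subset `S` being the product of its generators in
increasing order of `idx`. -/
abbrev SA (n : ℕ) := Finset (Fin n ⊕ Fin n) → MvPolynomial (Fin n) ℚ

/-- Position of a Grassmann generator in the chosen ordering: ghosts first. -/
def idx {n : ℕ} : Fin n ⊕ Fin n → ℕ
  | Sum.inl a => (a : ℕ)
  | Sum.inr a => n + (a : ℕ)

/-- The Koszul sign produced when merging two ordered Grassmann monomials. -/
def sgn {n : ℕ} (T U : Finset (Fin n ⊕ Fin n)) : ℚ :=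
  (-1 : ℚ) ^ ((T ×ˢ U).filter (fun p => idx p.2 < idx p.1)).card

/-- The (super-commutative) product of the extended algebra. -/
noncomputable def amul {n : ℕ} (x y : SA n) : SA n :=
  fun S => ∑ T ∈ S.powerset, sgn T (S \ T) • (x T * y (S \ T))

/-- The unit of the extended algebra. -/
noncomputable def aone {n : ℕ} : SA n := fun S => if S = ∅ then 1 else 0

/-- The generator `G_a`. -/
noncomputable def Gg {n : ℕ} (a : Fin n) : SA n := fun S => if S = ∅ then X a else 0

/-- The ghost `η^a`. -/
noncomputable def ηg {n : ℕ} (a : Fin n) : SA n := fun S => if S = {Sum.inl a} then 1 else 0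

/-- The ghost momentum `𝒫_a`. -/
noncomputable def Pg {n : ℕ} (a : Fin n) : SA n := fun S => if S = {Sum.inr a} then 1 else 0

/-- The (even) derivative `∂/∂G_a`. -/
noncomputable def dG {n : ℕ} (a : Fin n) (x : SA n) : SA n := fun S => (pderiv a) (x S)

/-- Left derivative with respect to the Grassmann generator `i`. -/
noncomputable def dL {n : ℕ} (i : Fin n ⊕ Fin n) (x : SA n) : SA n := fun S =>
  if i ∈ S then 0
  else ((-1 : ℚ) ^ (S.filter (fun j => idx j < idx i)).card) • x (insert i S)

/-- Right derivative with respect to the Grassmann generator `i`. -/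
noncomputable def dR {n : ℕ} (i : Fin n ⊕ Fin n) (x : SA n) : SA n := fun S =>
  if i ∈ S then 0
  else ((-1 : ℚ) ^ (S.filter (fun j => idx i < idx j)).card) • x (insert i S)

/-- The graded Poisson bracket of the extended algebra, determined by
`[G_a, G_b] = C a b` (a polynomial in the `G`'s), `[𝒫_a, η^b] = -δ_a^b`, all other
basic brackets zero, extended by the graded Leibniz rule:
original (`G`) part plus ghost part. -/
noncomputable def bra {n : ℕ} (C : Fin n → Fin n → MvPolynomial (Fin n) ℚ)
    (x y : SA n) : SA n :=
  (∑ a, ∑ b, C a b • amul (dG a x) (dG b y))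
  - ∑ a, (amul (dR (Sum.inr a) x) (dL (Sum.inl a) y)
          + amul (dR (Sum.inl a) x) (dL (Sum.inr a) y))

/-- Product of a list of elements of the extended algebra. -/
noncomputable def listProd {n : ℕ} (l : List (SA n)) : SA n := l.foldr amul aone

/-- Tuples of indices ranging over `{2,…,n}` (i.e. avoiding the first generator). -/
def goodF (n k : ℕ) [NeZero n] : Finset (Fin k → Fin n) :=
  Finset.univ.filter (fun f => ∀ i, f i ≠ 0)

/-- `T₁^{(k)} = G₁ η^{α₁}⋯η^{α_k} η^1 𝒫_{α₁}⋯𝒫_{α_k}` (summation over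
`α_i ∈ {2,…,n}`); the paper's generator `G₁` is `Gg 0`. -/
noncomputable def T1 (n k : ℕ) [NeZero n] : SA n :=
  ∑ f ∈ goodF n k,
    listProd (Gg 0 :: ((List.ofFn fun i : Fin k => ηg (f i)) ++ [ηg 0]
      ++ List.ofFn fun i : Fin k => Pg (f i)))

/-- `S^{(k)} = G₁ G_α η^{α₁}⋯η^{α_k} η^α η^1 𝒫_{α₁}⋯𝒫_{α_k}` (summation over
`α, α_i ∈ {2,…,n}`). -/
noncomputable def Sel (n k : ℕ) [NeZero n] : SA n :=
  ∑ f ∈ goodF n k, ∑ al ∈ Finset.univ.filter (fun a : Fin n => a ≠ 0),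
    listProd (Gg 0 :: Gg al :: ((List.ofFn fun i : Fin k => ηg (f i))
      ++ [ηg al, ηg 0] ++ List.ofFn fun i : Fin k => Pg (f i)))

/-- `T₂^{(k+1)} = G_{α_{k+1}} η^{α₁}⋯η^{α_{k+1}} η^1 𝒫₁ 𝒫_{α₁}⋯𝒫_{α_k}`
(summation over `α_i ∈ {2,…,n}`). -/
noncomputable def T2 (n k : ℕ) [NeZero n] : SA n :=
  ∑ f ∈ goodF n (k + 1),
    listProd (Gg (f (Fin.last k)) :: ((List.ofFn fun i : Fin (k + 1) => ηg (f i))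
      ++ [ηg 0, Pg 0] ++ List.ofFn fun i : Fin k => Pg (f i.castSucc)))

/-- The covariant contracting homotopy `σ = -∑_a 𝒫_a ∂/∂G_a`. -/
noncomputable def sOp {n : ℕ} (x : SA n) : SA n := -(∑ a, amul (Pg a) (dG a x))

noncomputable def e {n : ℕ} (i : Fin n ⊕ Fin n) : SA n := fun S => if S = {i} then 1 else 0

lemma idx_inj {n : ℕ} : Function.Injective (@idx n) := by
  rintro (a|a) (b|b) h <;> simp [idx] at h
  · exact congrArg Sum.inl (Fin.ext h)
  · exact absurd h (by omega)
  · exact absurd h (by have := a.isLt; omega)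
  · exact congrArg Sum.inr (Fin.ext h)

lemma sgn_singleton {n : ℕ} (i : Fin n ⊕ Fin n) (U : Finset (Fin n ⊕ Fin n)) :
    sgn {i} U = (-1:ℚ)^(U.filter (fun j => idx j < idx i)).card := by
  unfold sgn
  congr 1
  rw [Finset.singleton_product, Finset.filter_map, Finset.card_map]
  rfl

lemma amul_Gg {n : ℕ} (a : Fin n) (y : SA n) : amul (Gg a) y = fun S => X a * y S := by
  funext S
  unfold amul Gg
  rw [Finset.sum_eq_single ∅]
  · simp [sgn]
  · intro T _ hT; simp [hT]
  · intro h; simp at h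

lemma amul_e {n : ℕ} (i : Fin n ⊕ Fin n) (y : SA n) (S : Finset (Fin n ⊕ Fin n)) :
    amul (e i) y S =
      if i ∈ S then ((-1:ℚ)^((S.erase i).filter (fun j => idx j < idx i)).card) • y (S.erase i)
      else 0 := by
  unfold amul e
  have : ∀ T ∈ S.powerset, sgn T (S \ T) • ((if T = {i} then 1 else 0) * y (S \ T))
      = if T = {i} then sgn T (S \ T) • y (S \ T) else 0 := by
    intro T _
    rw [ite_mul, one_mul, zero_mul, smul_ite, smul_zero]
  rw [Finset.sum_congr rfl this, Finset.sum_ite_eq' S.powerset]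
  simp only [Finset.mem_powerset, Finset.singleton_subset_iff]
  rcases Classical.em (i ∈ S) with h | h <;> simp [h, sgn_singleton, ← Finset.erase_eq]

noncomputable def gl {n : ℕ} (L : List (Fin n ⊕ Fin n)) : SA n := listProd (L.map e)

lemma gl_cons {n : ℕ} (i : Fin n ⊕ Fin n) (L : List (Fin n ⊕ Fin n)) :
    gl (i :: L) = amul (e i) (gl L) := rfl

lemma amul_e_smul {n : ℕ} (i : Fin n ⊕ Fin n) (c : ℚ) (y : SA n) :
    amul (e i) (c • y) = c • amul (e i) y := by
  funext S
  simp only [amul_e, Pi.smul_apply]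
  split
  · rw [smul_comm]
  · rw [smul_zero]

lemma gl_sq {n : ℕ} (i : Fin n ⊕ Fin n) (L : List (Fin n ⊕ Fin n)) :
    gl (i :: i :: L) = 0 := by
  funext S
  simp only [gl_cons, amul_e, Pi.zero_apply]
  split
  · rw [if_neg (by simp), smul_zero]
  · rfl

lemma filt_card {n : ℕ} (V : Finset (Fin n ⊕ Fin n)) (j m : Fin n ⊕ Fin n) (hj : j ∈ V) :
    (V.filter (fun x => idx x < idx m)).card
      = ((V.erase j).filter (fun x => idx x < idx m)).card + (if idx j < idx m then 1 else 0) := by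
  conv_lhs => rw [← Finset.insert_erase hj]
  rw [Finset.filter_insert]
  split
  · rw [Finset.card_insert_of_notMem (by simp)]
  · rw [add_zero]

lemma gl_swap {n : ℕ} (i j : Fin n ⊕ Fin n) (L : List (Fin n ⊕ Fin n)) :
    gl (i :: j :: L) = - gl (j :: i :: L) := by
  rcases eq_or_ne i j with rfl | hij
  · rw [gl_sq, neg_zero]
  funext S
  simp only [gl_cons, amul_e, Pi.neg_apply]
  by_cases hi : i ∈ S <;> by_cases hj : j ∈ S
  · have hji : j ∈ S.erase i := Finset.mem_erase.2 ⟨hij.symm, hj⟩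
    have hij' : i ∈ S.erase j := Finset.mem_erase.2 ⟨hij, hi⟩
    rw [if_pos hi, if_pos hj, if_pos hji, if_pos hij', Finset.erase_right_comm (a := j)]
    set U := (S.erase i).erase j with hU
    rw [smul_smul, smul_smul]
    rw [← pow_add, ← pow_add, filt_card (S.erase i) j i hji, filt_card (S.erase j) i j hij']
    rw [Finset.erase_right_comm (a := j) (b := i), ← hU]
    have hne : idx i ≠ idx j := fun h => hij (idx_inj h)
    rcases hne.lt_or_gt with h | h
    · rw [if_neg (by omega), if_pos h, add_zero, pow_add, pow_add, pow_add]
      rw [show ((-1:ℚ))^1 = -1 by ring]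
      rw [show ∀ p : ℚ, p * -1 * ((-1:ℚ))^#(filter (fun x => idx x < idx i) U) = -(((-1:ℚ))^#(filter (fun x => idx x < idx i) U) * p) from fun p => by ring]
      rw [neg_smul, neg_neg, mul_comm]
    · rw [if_pos h, if_neg (by omega), add_zero, pow_add, pow_add, pow_add]
      rw [show ((-1:ℚ))^1 = -1 by ring]
      rw [show ∀ p : ℚ, p * -1 * ((-1:ℚ))^#(filter (fun x => idx x < idx j) U) = -(p * ((-1:ℚ))^#(filter (fun x => idx x < idx j) U)) from fun p => by ring]
      rw [mul_comm, neg_smul]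
  · rw [if_pos hi, if_neg hj, if_neg (by simp [hj]), smul_zero, neg_zero]
  · rw [if_neg hi, if_pos hj, if_neg (by simp [hi]), smul_zero, neg_zero]
  · rw [if_neg hi, if_neg hj, neg_zero]

lemma gl_move {n : ℕ} (M : List (Fin n ⊕ Fin n)) (i : Fin n ⊕ Fin n)
    (N : List (Fin n ⊕ Fin n)) :
    gl (i :: (M ++ N)) = ((-1:ℚ)^M.length) • gl (M ++ i :: N) := by
  induction M with
  | nil => simp
  | cons j M ih =>
      rw [List.cons_append, gl_swap, gl_cons, ih, amul_e_smul, ← gl_cons, ← List.cons_append,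
        List.length_cons, ← neg_smul, pow_succ]
      congr 1
      ring

lemma amul_sum {n : ℕ} (x : SA n) {ι : Type*} (s : Finset ι) (F : ι → SA n) :
    amul x (∑ i ∈ s, F i) = ∑ i ∈ s, amul x (F i) := by
  funext S
  simp only [amul, Finset.sum_apply, Finset.mul_sum, Finset.smul_sum]
  exact Finset.sum_comm

lemma amul_add' {n : ℕ} (x y z : SA n) : amul x (y + z) = amul x y + amul x z := by
  funext S
  simp [amul, mul_add, smul_add, Finset.sum_add_distrib]

lemma amul_zero' {n : ℕ} (x : SA n) : amul x 0 = 0 := by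
  funext S
  simp [amul]

lemma amul_smul' {n : ℕ} (x : SA n) (c : ℚ) (y : SA n) :
    amul x (c • y) = c • amul x y := by
  funext S
  simp only [amul, Pi.smul_apply, Finset.smul_sum, mul_smul_comm]
  exact Finset.sum_congr rfl fun T _ => smul_comm _ _ _

noncomputable def dG' {n : ℕ} (a : Fin n) (x : SA n) : SA n := fun S => (pderiv a) (x S)

lemma pderiv_gl {n : ℕ} (a : Fin n) (L : List (Fin n ⊕ Fin n)) (S : Finset (Fin n ⊕ Fin n)) :
    pderiv a (gl L S) = 0 := by
  induction L generalizing S with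
  | nil =>
      show pderiv a (aone S) = 0
      unfold aone
      split <;> simp
  | cons i L ih =>
      rw [gl_cons, amul_e]
      split
      · rw [Derivation.map_smul, ih, smul_zero]
      · exact map_zero _

lemma e_Gg_comm {n : ℕ} (i : Fin n ⊕ Fin n) (c : Fin n) (y : SA n) :
    amul (e i) (amul (Gg c) y) = amul (Gg c) (amul (e i) y) := by
  funext S
  simp only [amul_Gg, amul_e]
  split
  · rw [mul_smul_comm]
  · rw [mul_zero]

noncomputable def sOp' {n : ℕ} (x : SA n) : SA n := -(∑ a, amul (e (Sum.inr a)) (dG' a x))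

lemma dG_term {n : ℕ} [NeZero n] (b : Fin n) (L : List (Fin n ⊕ Fin n)) (a : Fin n) :
    dG' a (amul (Gg 0) (amul (Gg b) (gl L)))
      = (if a = 0 then amul (Gg b) (gl L) else 0)
        + (if a = b then amul (Gg 0) (gl L) else 0) := by
  funext S
  simp only [dG', amul_Gg, Pi.add_apply]
  rw [pderiv_mul, pderiv_mul, pderiv_gl, mul_zero, add_zero]
  by_cases h0 : a = 0 <;> by_cases hb : a = b
  · subst h0; subst hb
    simp [pderiv_X_self]
  · subst h0
    simp [pderiv_X_self, pderiv_X_of_ne (Ne.symm hb), hb]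
  · subst hb
    simp [pderiv_X_self, pderiv_X_of_ne (Ne.symm h0), h0]
  · simp [pderiv_X_of_ne (Ne.symm h0), pderiv_X_of_ne (Ne.symm hb), h0, hb]

lemma sOp_term {n : ℕ} [NeZero n] (b : Fin n) (L : List (Fin n ⊕ Fin n)) :
    sOp' (amul (Gg 0) (amul (Gg b) (gl L)))
      = -(amul (Gg b) (gl (Sum.inr 0 :: L)) + amul (Gg 0) (gl (Sum.inr b :: L))) := by
  unfold sOp'
  congr 1
  have : ∀ a : Fin n, amul (e (Sum.inr a)) (dG' a (amul (Gg 0) (amul (Gg b) (gl L))))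
      = (if a = 0 then amul (e (Sum.inr a)) (amul (Gg b) (gl L)) else 0)
        + (if a = b then amul (e (Sum.inr a)) (amul (Gg 0) (gl L)) else 0) := by
    intro a
    rw [dG_term, amul_add', apply_ite (amul (e (Sum.inr a))), apply_ite (amul (e (Sum.inr a))),
      amul_zero']
  rw [Finset.sum_congr rfl (fun a _ => this a), Finset.sum_add_distrib,
    Finset.sum_ite_eq' Finset.univ, Finset.sum_ite_eq' Finset.univ]
  simp only [Finset.mem_univ, if_pos]
  rw [e_Gg_comm, e_Gg_comm, ← gl_cons, ← gl_cons]

lemma sOp_sum {n : ℕ} {ι : Type*} (s : Finset ι) (F : ι → SA n) :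
    sOp' (∑ i ∈ s, F i) = ∑ i ∈ s, sOp' (F i) := by
  unfold sOp'
  have hdG : ∀ a, dG' a (∑ i ∈ s, F i) = ∑ i ∈ s, dG' a (F i) := by
    intro a; funext S
    simp [dG', Finset.sum_apply]
  rw [Finset.sum_congr rfl (fun a (_ : a ∈ Finset.univ) => by rw [hdG a, amul_sum])]
  rw [Finset.sum_comm, ← Finset.sum_neg_distrib]

lemma sOp_eq {n : ℕ} : (sOp : SA n → SA n) = sOp' := rfl

lemma sum_snoc {n : ℕ} [NeZero n] (k : ℕ) {M : Type*} [AddCommMonoid M]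
    (F : (Fin (k+1) → Fin n) → M) :
    ∑ f ∈ goodF n k, ∑ al ∈ Finset.univ.filter (fun a : Fin n => a ≠ 0), F (Fin.snoc f al)
      = ∑ g ∈ goodF n (k+1), F g := by
  rw [← Finset.sum_product']
  refine Finset.sum_nbij' (fun p => Fin.snoc p.1 p.2) (fun g => (Fin.init g, g (Fin.last k)))
    ?_ ?_ ?_ ?_ ?_
  · rintro ⟨f, al⟩ hp
    simp only [Finset.mem_product, goodF, Finset.mem_filter, Finset.mem_univ, true_and] at hp ⊢
    intro i
    refine Fin.lastCases ?_ ?_ i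
    · simpa using hp.2
    · intro j; simpa using hp.1 j
  · intro g hg
    simp only [goodF, Finset.mem_product, Finset.mem_filter, Finset.mem_univ, true_and] at hg ⊢
    exact ⟨fun i => hg _, hg _⟩
  · rintro ⟨f, al⟩ _
    simp [Fin.init_snoc, Fin.snoc_last]
  · intro g _
    simp [Fin.snoc_init_self]
  · rintro ⟨f, al⟩ _
    rfl

def LL {n : ℕ} [NeZero n] (k : ℕ) (f : Fin k → Fin n) (al : Fin n) : List (Fin n ⊕ Fin n) :=
  (List.ofFn fun i : Fin k => Sum.inl (f i)) ++ [Sum.inl al, Sum.inl 0]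
    ++ List.ofFn fun i : Fin k => Sum.inr (f i)

def LT1 {n : ℕ} [NeZero n] (k : ℕ) (g : Fin (k+1) → Fin n) : List (Fin n ⊕ Fin n) :=
  (List.ofFn fun i : Fin (k+1) => Sum.inl (g i)) ++ [Sum.inl 0]
    ++ List.ofFn fun i : Fin (k+1) => Sum.inr (g i)

def LT2 {n : ℕ} [NeZero n] (k : ℕ) (g : Fin (k+1) → Fin n) : List (Fin n ⊕ Fin n) :=
  (List.ofFn fun i : Fin (k+1) => Sum.inl (g i)) ++ [Sum.inl 0, Sum.inr 0]
    ++ List.ofFn fun i : Fin k => Sum.inr (g i.castSucc)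

lemma Sel_eq {n : ℕ} [NeZero n] (k : ℕ) :
    Sel n k = ∑ f ∈ goodF n k, ∑ al ∈ Finset.univ.filter (fun a : Fin n => a ≠ 0),
      amul (Gg 0) (amul (Gg al) (gl (LL k f al))) := by
  unfold Sel
  refine Finset.sum_congr rfl fun f _ => Finset.sum_congr rfl fun al _ => ?_
  have hl : ((List.ofFn fun i : Fin k => ηg (f i)) ++ [ηg al, ηg 0]
      ++ List.ofFn fun i : Fin k => Pg (f i)) = List.map e (LL k f al) := by
    simp only [LL, List.map_append, List.map_ofFn, List.map_cons, List.map_nil]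
    rfl
  rw [hl]
  rfl

lemma T1_eq {n : ℕ} [NeZero n] (k : ℕ) :
    T1 n (k+1) = ∑ g ∈ goodF n (k+1), amul (Gg 0) (gl (LT1 k g)) := by
  unfold T1
  refine Finset.sum_congr rfl fun g _ => ?_
  have hl : ((List.ofFn fun i : Fin (k+1) => ηg (g i)) ++ [ηg 0]
      ++ List.ofFn fun i : Fin (k+1) => Pg (g i)) = List.map e (LT1 k g) := by
    simp only [LT1, List.map_append, List.map_ofFn, List.map_cons, List.map_nil]
    rfl
  rw [hl]
  rfl

lemma T2_eq {n : ℕ} [NeZero n] (k : ℕ) :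
    T2 n k = ∑ g ∈ goodF n (k+1), amul (Gg (g (Fin.last k))) (gl (LT2 k g)) := by
  unfold T2
  refine Finset.sum_congr rfl fun g _ => ?_
  have hl : ((List.ofFn fun i : Fin (k+1) => ηg (g i)) ++ [ηg 0, Pg 0]
      ++ List.ofFn fun i : Fin k => Pg (g i.castSucc)) = List.map e (LT2 k g) := by
    simp only [LT2, List.map_append, List.map_ofFn, List.map_cons, List.map_nil]
    rfl
  rw [hl]
  rfl

lemma key {n : ℕ} [NeZero n] (k : ℕ) (f : Fin k → Fin n) (al : Fin n) :
    sOp' (amul (Gg 0) (amul (Gg al) (gl (LL k f al))))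
      = ((-1:ℚ)^(k+1)) • amul (Gg ((Fin.snoc f al : Fin (k+1) → Fin n) (Fin.last k)))
            (gl (LT2 k (Fin.snoc f al)))
        - amul (Gg 0) (gl (LT1 k (Fin.snoc f al))) := by
  rw [sOp_term]
  have hLT2 : LT2 k (Fin.snoc f al) = ((List.ofFn fun i : Fin k => (Sum.inl (f i) : Fin n ⊕ Fin n))
      ++ [Sum.inl al, Sum.inl 0]) ++ (Sum.inr 0 :: List.ofFn fun i : Fin k => Sum.inr (f i)) := by
    unfold LT2
    rw [List.ofFn_succ']
    simp only [Fin.snoc_castSucc, Fin.snoc_last, List.concat_eq_append, List.append_assoc,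
      List.cons_append, List.singleton_append, List.nil_append]
  have hLT1 : LT1 k (Fin.snoc f al) = LL k f al ++ [Sum.inr al] := by
    unfold LT1 LL
    rw [List.ofFn_succ', List.ofFn_succ' (f := fun i : Fin (k+1) => (Sum.inr ((Fin.snoc f al : Fin (k+1) → Fin n) i) : Fin n ⊕ Fin n))]
    simp only [Fin.snoc_castSucc, Fin.snoc_last, List.concat_eq_append, List.append_assoc,
      List.cons_append, List.singleton_append, List.nil_append]
  have h1 : gl (Sum.inr 0 :: LL k f al) = ((-1:ℚ)^k) • gl (LT2 k (Fin.snoc f al)) := by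
    rw [show (Sum.inr 0 :: LL k f al : List (Fin n ⊕ Fin n))
        = Sum.inr 0 :: (((List.ofFn fun i : Fin k => Sum.inl (f i)) ++ [Sum.inl al, Sum.inl 0])
          ++ List.ofFn fun i : Fin k => Sum.inr (f i)) from rfl]
    rw [gl_move]
    have hlen : ((List.ofFn fun i : Fin k => (Sum.inl (f i) : Fin n ⊕ Fin n))
        ++ [Sum.inl al, Sum.inl 0]).length = k + 2 := by simp
    rw [hlen, hLT2]
    congr 1
    rw [pow_add]; norm_num
  have h2 : gl (Sum.inr al :: LL k f al) = gl (LT1 k (Fin.snoc f al)) := by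
    have hm := gl_move (LL k f al) (Sum.inr al) []
    rw [List.append_nil] at hm
    have hlen : (LL k f al).length = 2*(k + 1) := by simp [LL]; omega
    have hpow : ((-1:ℚ))^(2*(k+1)) = 1 := by rw [pow_mul]; norm_num
    rw [hm, hlen, hpow, one_smul, hLT1]
  rw [h1, h2, amul_smul', Fin.snoc_last]
  rw [neg_add, ← neg_smul, pow_succ, sub_eq_add_neg]
  congr 1
  congr 1
  ring

/-- `σ S^{(k)} = (-1)^{k+1} T₂^{(k+1)} - T₁^{(k+1)}`. -/
theorem sigma_S_eq (n : ℕ) [NeZero n] (k : ℕ) :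
    sOp (Sel n k) = ((-1 : ℚ) ^ (k + 1)) • T2 n k - T1 n (k + 1) := by
  rw [sOp_eq, Sel_eq, sOp_sum]
  rw [Finset.sum_congr rfl (fun f (_ : f ∈ goodF n k) => sOp_sum _ _)]
  rw [Finset.sum_congr rfl (fun f (_ : f ∈ goodF n k) =>
    Finset.sum_congr rfl (fun al (_ : al ∈ Finset.univ.filter (fun a : Fin n => a ≠ 0)) =>
      key k f al))]
  rw [sum_snoc k (fun g => ((-1:ℚ)^(k+1)) • amul (Gg (g (Fin.last k))) (gl (LT2 k g))
      - amul (Gg 0) (gl (LT1 k g)))]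
  rw [Finset.sum_sub_distrib, ← Finset.smul_sum, ← T2_eq, ← T1_eq]
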